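/- arXiv:2105.08779 — 2 statements merged into one kernel-verified Lean document; each statement's English description precedes it below -/
import Mathlib

section
/- Let C_1, …, C_K be nonempty, pairwise disjoint subsets of the Euclidean plane ℝ², each of which contains a point of the closed ball of radius 1 centered at the origin, and suppose that for all i ≠ j, every x ∈ C_i and y ∈ C_j satisfy ‖x − y‖ > 1. Then K ≤ 7. -/
open Real Complex

/-- Inner-product formula: `re (u * conj v) = |u| |v| cos (arg u - arg v)`. -/
lemma re_mul_conj_eq (u v : ℂ) :
    (u * (starRingEnd ℂ) v).re = ‖u‖ * ‖v‖ * Real.cos (u.arg - v.arg) := by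
  rw [Complex.mul_re, Complex.conj_re, Complex.conj_im, Real.cos_sub,
    ← Complex.norm_mul_cos_arg u, ← Complex.norm_mul_sin_arg u,
    ← Complex.norm_mul_cos_arg v, ← Complex.norm_mul_sin_arg v]
  ring

/-- Two complex numbers of norm at most 1 whose arguments differ by at most `π/3`
are at distance at most 1. -/
lemma close_of_arg_close (u v : ℂ) (hu : ‖u‖ ≤ 1) (hv : ‖v‖ ≤ 1)
    (h : |u.arg - v.arg| ≤ π / 3) : ‖u - v‖ ≤ 1 := by
  have hc : (1 : ℝ) / 2 ≤ Real.cos (u.arg - v.arg) := by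
    rw [← Real.cos_abs, ← Real.cos_pi_div_three]
    exact Real.cos_le_cos_of_nonneg_of_le_pi (abs_nonneg _)
      (by linarith [Real.pi_pos]) h
  have hsq : ‖u - v‖ ^ 2 ≤ 1 := by
    rw [Complex.sq_norm, Complex.normSq_sub, re_mul_conj_eq,
      ← Complex.sq_norm u, ← Complex.sq_norm v]
    nlinarith [mul_nonneg (norm_nonneg u) (norm_nonneg v),
      mul_nonneg (norm_nonneg u) (sub_nonneg.2 hu),
      mul_nonneg (norm_nonneg v) (sub_nonneg.2 hv),
      mul_nonneg (sub_nonneg.2 hu) (sub_nonneg.2 hv),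
      mul_le_mul_of_nonneg_left hc (mul_nonneg (norm_nonneg u) (norm_nonneg v))]
  nlinarith [norm_nonneg (u - v)]

/-- If `C_1, …, C_K` are nonempty pairwise disjoint subsets of the plane,
each meeting the closed unit ball centered at the origin, and points of
distinct sets are at distance `> 1`, then `K ≤ 7`. -/
theorem stmt_3 (K : ℕ) (C : Fin K → Set (EuclideanSpace ℝ (Fin 2)))
    (hne : ∀ i, (C i).Nonempty)
    (hdisj : ∀ i j, i ≠ j → Disjoint (C i) (C j))
    (hball : ∀ i, ∃ x ∈ C i, ‖x‖ ≤ 1)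
    (hsep : ∀ i j, i ≠ j → ∀ x ∈ C i, ∀ y ∈ C j, 1 < ‖x - y‖) :
    K ≤ 7 := by
  by_contra hK
  push_neg at hK
  choose x hxC hxnorm using hball
  set e := Complex.orthonormalBasisOneI.repr.symm with he
  set z : Fin K → ℂ := fun i => e (x i) with hz
  have hznorm : ∀ i, ‖z i‖ ≤ 1 := by
    intro i
    simpa [hz, e.norm_map] using hxnorm i
  have hzsep : ∀ i j, i ≠ j → 1 < ‖z i - z j‖ := by
    intro i j hij
    have : ‖e (x i) - e (x j)‖ = ‖x i - x j‖ := by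
      rw [← map_sub, e.norm_map]
    rw [this]
    exact hsep i j hij (x i) (hxC i) (x j) (hxC j)
  -- sector index
  set ι : Fin 7 → Fin K := fun i => ⟨i, by omega⟩ with hι
  have hιinj : Function.Injective ι := by
    intro a b hab
    simpa [hι, Fin.ext_iff] using hab
  have harg : ∀ i : Fin 7, 0 < ((z (ι i)).arg + π) / (π / 3) ∧
      ((z (ι i)).arg + π) / (π / 3) ≤ 6 := by
    intro i
    have h1 := Complex.neg_pi_lt_arg (z (ι i))
    have h2 := Complex.arg_le_pi (z (ι i))
    have hπ : 0 < π / 3 := by positivity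
    exact ⟨div_pos (by linarith) hπ, by rw [div_le_iff₀ hπ]; linarith⟩
  set n : Fin 7 → ℤ := fun i => ⌈((z (ι i)).arg + π) / (π / 3)⌉ with hn
  have hn1 : ∀ i, 1 ≤ n i := fun i => Int.ceil_pos.mpr (harg i).1
  have hn6 : ∀ i, n i ≤ 6 := fun i => Int.ceil_le.mpr (by exact_mod_cast (harg i).2)
  obtain ⟨i, j, hij, hfij⟩ := Fintype.exists_ne_map_eq_of_card_lt
    (fun i : Fin 7 => (⟨(n i).toNat - 1, by have := hn1 i; have := hn6 i; omega⟩ : Fin 6))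
    (by simp)
  have hfij' : (n i).toNat - 1 = (n j).toNat - 1 := congrArg Fin.val hfij
  have hnij : n i = n j := by have := hn1 i; have := hn1 j; omega
  -- same sector ⇒ args within π/3
  have hπ : 0 < π / 3 := by positivity
  have hi1 : ((z (ι i)).arg + π) / (π / 3) ≤ (n i : ℝ) := Int.ceil_le.mp le_rfl
  have hj1 : ((z (ι j)).arg + π) / (π / 3) ≤ (n j : ℝ) := Int.ceil_le.mp le_rfl
  have hi2 : ((n i : ℝ) - 1) < ((z (ι i)).arg + π) / (π / 3) := by
    have h' : (n i - 1 : ℤ) < n i := by omega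
    rw [hn] at h'; simp only at h'
    exact_mod_cast Int.lt_ceil.mp h'
  have hj2 : ((n j : ℝ) - 1) < ((z (ι j)).arg + π) / (π / 3) := by
    have h' : (n j - 1 : ℤ) < n j := by omega
    rw [hn] at h'; simp only at h'
    exact_mod_cast Int.lt_ceil.mp h'
  have hargclose : |(z (ι i)).arg - (z (ι j)).arg| ≤ π / 3 := by
    rw [abs_le]
    have hnn : (n i : ℝ) = (n j : ℝ) := by exact_mod_cast hnij
    rw [div_le_iff₀ hπ] at hi1 hj1
    rw [lt_div_iff₀ hπ] at hi2 hj2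
    constructor <;> [nlinarith; nlinarith]
  have := close_of_arg_close _ _ (hznorm (ι i)) (hznorm (ι j)) hargclose
  have := hzsep (ι i) (ι j) (fun h => hij (hιinj h))
  linarith
end

section
/- Let x be a real number and let k, n be integers with 1 ≤ k ≤ n. Then Σ_{t=k}^{n} Σ_{j=k}^{t} C(n,t) C(t,j) x^{t+j} (1−x)^{n−j} = Σ_{i=k}^{n} C(n,i) (x²)^i (1−x²)^{n−i}. -/
/-!
Exchanging the order of summation, the coefficient of `x ^ j (1 - x) ^ (n - j)` is the sum over
`t` of `C(n,t) C(t,j) x ^ t`. The identity `C(n,t) C(t,j) = C(n,j) C(n-j,t-j)` turns this into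
`C(n,j) x ^ j (1 + x) ^ (n - j)` by the binomial theorem, and `(1 + x)(1 - x) = 1 - x²` finishes.
-/

open Finset

theorem Nat.sum_Icc_choose_mul_choose_mul_pow {R : Type*} [CommSemiring R] (x : R) {j n : ℕ}
    (hjn : j ≤ n) :
    ∑ t ∈ Icc j n, (n.choose t : R) * (t.choose j : R) * x ^ t
      = (n.choose j : R) * x ^ j * (1 + x) ^ (n - j) := by
  have hchoose (s : ℕ) :
      (n.choose (j + s) : R) * ((j + s).choose j : R) = n.choose j * (n - j).choose s := by
    have h := Nat.choose_mul (n := n) (Nat.le_add_right j s)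
    rw [Nat.add_sub_cancel_left] at h
    rw [← Nat.cast_mul, ← Nat.cast_mul, h]
  rw [← Ico_add_one_right_eq_Icc, sum_Ico_eq_sum_range, show n + 1 - j = n - j + 1 by omega,
    add_comm 1 x, add_pow, mul_sum]
  refine sum_congr rfl fun s _ => ?_
  rw [hchoose, one_pow, pow_add]
  ring

theorem stmt_7_general (x : ℝ) (k n : ℕ) :
    ∑ t ∈ Finset.Icc k n, ∑ j ∈ Finset.Icc k t,
        (n.choose t : ℝ) * (t.choose j : ℝ) * x ^ (t + j) * (1 - x) ^ (n - j)
      = ∑ i ∈ Finset.Icc k n, (n.choose i : ℝ) * (x ^ 2) ^ i * (1 - x ^ 2) ^ (n - i) := by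
  rw [sum_comm' (s' := fun j => Icc j n) (t' := Icc k n) fun t j => by
    simp only [mem_Icc]; omega]
  refine sum_congr rfl fun j hj => ?_
  calc ∑ t ∈ Icc j n, (n.choose t : ℝ) * (t.choose j : ℝ) * x ^ (t + j) * (1 - x) ^ (n - j)
      = (∑ t ∈ Icc j n, (n.choose t : ℝ) * (t.choose j : ℝ) * x ^ t) *
          (x ^ j * (1 - x) ^ (n - j)) := by
        rw [sum_mul]
        exact sum_congr rfl fun t _ => by ring
    _ = (n.choose j : ℝ) * (x ^ 2) ^ j * ((1 + x) * (1 - x)) ^ (n - j) := by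
        rw [Nat.sum_Icc_choose_mul_choose_mul_pow x (mem_Icc.mp hj).2, mul_pow]
        ring
    _ = (n.choose j : ℝ) * (x ^ 2) ^ j * (1 - x ^ 2) ^ (n - j) := by ring

/-- Binomial identity: the double sum equals the upper tail of a
binomial distribution with success probability `x²`. -/
theorem stmt_7 (x : ℝ) (k n : ℕ) (hk : 1 ≤ k) (hkn : k ≤ n) :
    ∑ t ∈ Finset.Icc k n, ∑ j ∈ Finset.Icc k t,
        (n.choose t : ℝ) * (t.choose j : ℝ) * x ^ (t + j) * (1 - x) ^ (n - j)
      = ∑ i ∈ Finset.Icc k n, (n.choose i : ℝ) * (x ^ 2) ^ i * (1 - x ^ 2) ^ (n - i) :=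
  stmt_7_general x k n
end
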